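/- Let R be a commutative ring in which 2 is invertible, M an R-module, Q a quadratic form on M, and let e : Cl(Q) ≃ Λ(M) denote the Chevalley linear equivalence between the Clifford algebra of Q and the exterior algebra of M (quantization map c = e^{-1}, symbol map σ = e). Then for every i-vector α ∈ Λ^i M and every j-vector β ∈ Λ^j M, the element σ(c(α)·c(β)) − α ∧ β of Λ(M) lies in the sum of the homogeneous components of exterior degree at most i + j − 2. -/

import Mathlib

/-!
Filter `Λ(M)` by degree, `F n = ⨆ k ≤ n, Λᵏ M`, and for `y` in the Clifford algebra consider the
defect `δ_y α = σ(c α * y) - α ∧ σ y`, which is linear in `α`. Unfolding the Chevalley map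
through `changeForm` gives, with `B` the polar form of `Q` and `⌋` the contraction,
`c (v ∧ α) = v * c α - c (B v ⌋ α)` and `σ (v * x) = v ∧ σ x + B v ⌋ σ x`, hence
`δ_y (v ∧ α) = v ∧ δ_y α + B v ⌋ σ(c α * y) - σ(c (B v ⌋ α) * y)`.
Since contraction lowers the degree by one, induction on the degree of `α` shows that `δ_y` maps
`F i` into `F (i + j - 2)` whenever `σ y ∈ F j`.
-/

open CliffordAlgebra QuadraticMap

namespace ExteriorAlgebra

variable (R M : Type*) [CommRing R] [AddCommGroup M] [Module R M]

-- Indexed by `ℤ` so that `F (i + j - 2)` is `⊥` rather than a truncated `F 0` when `i + j < 2`.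
def degreeLE (n : ℤ) : Submodule R (ExteriorAlgebra R M) :=
  ⨆ (k : ℕ) (_ : (k : ℤ) ≤ n), ⋀[R]^k M

variable {R M}

theorem pow_le_degreeLE {k : ℕ} {n : ℤ} (h : (k : ℤ) ≤ n) : ⋀[R]^k M ≤ degreeLE R M n :=
  le_iSup₂_of_le k h le_rfl

theorem degreeLE_mono : Monotone (degreeLE R M) := fun _ _ h =>
  iSup₂_le fun _ hk => pow_le_degreeLE (hk.trans h)

theorem degreeLE_le_comap_of_pow_le {f : ExteriorAlgebra R M →ₗ[R] ExteriorAlgebra R M}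
    {i c : ℤ} (h : ∀ k : ℕ, (k : ℤ) ≤ i → ⋀[R]^k M ≤ (degreeLE R M (k + c)).comap f) :
    degreeLE R M i ≤ (degreeLE R M (i + c)).comap f :=
  iSup₂_le fun k hk => (h k hk).trans (Submodule.comap_mono (degreeLE_mono (by omega)))

theorem degreeLE_mul_le (a b : ℤ) :
    degreeLE R M a * degreeLE R M b ≤ degreeLE R M (a + b) := by
  simp only [degreeLE, Submodule.iSup_mul, Submodule.mul_iSup]
  refine iSup₂_le fun k hk => iSup₂_le fun l hl => ?_
  rw [← pow_add]
  exact pow_le_degreeLE (by push_cast; omega)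

theorem mul_mem_degreeLE {a b : ℤ} {x y : ExteriorAlgebra R M} (hx : x ∈ degreeLE R M a)
    (hy : y ∈ degreeLE R M b) : x * y ∈ degreeLE R M (a + b) :=
  degreeLE_mul_le a b (Submodule.mul_mem_mul hx hy)

theorem ι_mem_degreeLE_one (v : M) : ι R v ∈ degreeLE R M 1 :=
  pow_le_degreeLE le_rfl (by simpa only [exteriorPower, pow_one] using LinearMap.mem_range_self _ v)

theorem contractLeft_pow_le (d : Module.Dual R M) (k : ℕ) :
    ⋀[R]^k M ≤ (degreeLE R M (k - 1)).comap (contractLeft d) := by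
  intro x hx
  induction hx using Submodule.pow_induction_on_left' with
  | algebraMap r => simp only [Submodule.mem_comap, contractLeft_algebraMap, zero_mem]
  | add x y _ _ _ hx hy => rw [Submodule.mem_comap, map_add]; exact add_mem hx hy
  | mem_mul m hm l x hx ih =>
    obtain ⟨v, rfl⟩ := hm
    rw [Submodule.mem_comap, contractLeft_ι_mul]
    refine sub_mem (Submodule.smul_mem _ _ (pow_le_degreeLE (by omega) hx)) ?_
    exact degreeLE_mono (by omega) (mul_mem_degreeLE (ι_mem_degreeLE_one v) ih)

theorem contractLeft_mem_degreeLE (d : Module.Dual R M) {n : ℤ} {x : ExteriorAlgebra R M}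
    (hx : x ∈ degreeLE R M n) : contractLeft d x ∈ degreeLE R M (n - 1) :=
  by
  rw [sub_eq_add_neg]
  refine degreeLE_le_comap_of_pow_le (fun k _ => ?_) hx
  simpa only [sub_eq_add_neg] using contractLeft_pow_le d k

end ExteriorAlgebra

namespace CliffordAlgebra

open ExteriorAlgebra (exteriorPower degreeLE degreeLE_mono pow_le_degreeLE mul_mem_degreeLE
  degreeLE_le_comap_of_pow_le ι_mem_degreeLE_one contractLeft_mem_degreeLE)

variable {R M : Type*} [CommRing R] [Invertible (2 : R)] [AddCommGroup M] [Module R M]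
  (Q : QuadraticForm R M)

theorem equivExterior_ι_mul (v : M) (x : CliffordAlgebra Q) :
    equivExterior Q (ι Q v * x) =
      ExteriorAlgebra.ι R v * equivExterior Q x + contractLeft (associated Q v) (equivExterior Q x) := by
  rw [equivExterior, changeFormEquiv_apply, changeForm_ι_mul]
  simp [sub_eq_add_neg]

theorem equivExterior_symm_ι_mul (v : M) (α : ExteriorAlgebra R M) :
    (equivExterior Q).symm (ExteriorAlgebra.ι R v * α) =
      ι Q v * (equivExterior Q).symm α - (equivExterior Q).symm (contractLeft (associated Q v) α) := by
  simp only [equivExterior, changeFormEquiv_symm, changeFormEquiv_apply, changeForm_ι_mul,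
    changeForm_contractLeft]
  simp

theorem equivExterior_symm_one : (equivExterior Q).symm 1 = 1 :=
  changeForm_one (changeForm.neg_proof changeForm.associated_neg_proof)

def symbolDefect (y : CliffordAlgebra Q) : ExteriorAlgebra R M →ₗ[R] ExteriorAlgebra R M :=
  (equivExterior Q).toLinearMap ∘ₗ LinearMap.mulRight R y ∘ₗ (equivExterior Q).symm.toLinearMap -
    LinearMap.mulRight R (equivExterior Q y)

theorem symbolDefect_apply (y : CliffordAlgebra Q) (α : ExteriorAlgebra R M) :
    symbolDefect Q y α = equivExterior Q ((equivExterior Q).symm α * y) - α * equivExterior Q y :=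
  rfl

variable {Q} {y : CliffordAlgebra Q} {j : ℤ}

theorem equivExterior_symm_mul_mem_degreeLE {i : ℤ} {α : ExteriorAlgebra R M}
    (hα : α ∈ degreeLE R M i) (hy : equivExterior Q y ∈ degreeLE R M j)
    (hd : symbolDefect Q y α ∈ degreeLE R M (i + j)) :
    equivExterior Q ((equivExterior Q).symm α * y) ∈ degreeLE R M (i + j) := by
  rw [← sub_add_cancel (equivExterior Q ((equivExterior Q).symm α * y)) (α * equivExterior Q y)]
  exact add_mem hd (mul_mem_degreeLE hα hy)

theorem symbolDefect_ι_mul (v : M) (α : ExteriorAlgebra R M) :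
    symbolDefect Q y (ExteriorAlgebra.ι R v * α) =
      ExteriorAlgebra.ι R v * symbolDefect Q y α
        + contractLeft (associated Q v) (equivExterior Q ((equivExterior Q).symm α * y))
        - equivExterior Q ((equivExterior Q).symm (contractLeft (associated Q v) α) * y) := by
  rw [symbolDefect_apply, symbolDefect_apply, equivExterior_symm_ι_mul, sub_mul, map_sub,
    mul_assoc, equivExterior_ι_mul, mul_sub, mul_assoc]
  abel

theorem pow_le_comap_symbolDefect (hy : equivExterior Q y ∈ degreeLE R M j) :
    ∀ k : ℕ, ⋀[R]^k M ≤ (degreeLE R M (k + j - 2)).comap (symbolDefect Q y)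
  | 0 => by
    rw [exteriorPower, pow_zero, Submodule.one_le, Submodule.mem_comap, symbolDefect_apply,
      equivExterior_symm_one, one_mul, one_mul, sub_self]
    exact zero_mem _
  | k + 1 => by
    have ih : degreeLE R M k ≤ (degreeLE R M (k + (j - 2))).comap (symbolDefect Q y) :=
      degreeLE_le_comap_of_pow_le fun l _ => by
        simpa only [add_sub_assoc] using pow_le_comap_symbolDefect hy l
    rw [exteriorPower, pow_succ', Submodule.mul_le]
    rintro _ ⟨v, rfl⟩ α hα
    replace hα : α ∈ degreeLE R M k := pow_le_degreeLE le_rfl hα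
    have hγ := contractLeft_mem_degreeLE (associated Q v) hα
    rw [Submodule.mem_comap, symbolDefect_ι_mul]
    refine sub_mem (add_mem ?_ ?_) ?_
    · exact degreeLE_mono (by omega) (mul_mem_degreeLE (ι_mem_degreeLE_one v) (ih hα))
    · exact degreeLE_mono (by omega) (contractLeft_mem_degreeLE _
        (equivExterior_symm_mul_mem_degreeLE hα hy (degreeLE_mono (by omega) (ih hα))))
    · have hdγ := ih (degreeLE_mono (by omega) hγ)
      exact degreeLE_mono (by omega)
        (equivExterior_symm_mul_mem_degreeLE hγ hy (degreeLE_mono (by omega) hdγ))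

theorem symbolDefect_mem_degreeLE (hy : equivExterior Q y ∈ degreeLE R M j) {i : ℤ}
    {α : ExteriorAlgebra R M} (hα : α ∈ degreeLE R M i) :
    symbolDefect Q y α ∈ degreeLE R M (i + j - 2) := by
  rw [add_sub_assoc]
  refine degreeLE_le_comap_of_pow_le (fun k _ => ?_) hα
  simpa only [add_sub_assoc] using pow_le_comap_symbolDefect hy k

end CliffordAlgebra

theorem stmt_3 {R M : Type*} [CommRing R] [Invertible (2 : R)] [AddCommGroup M] [Module R M]
    (Q : QuadraticForm R M) (i j : ℕ)
    (α β : ExteriorAlgebra R M) (hα : α ∈ ⋀[R]^i M) (hβ : β ∈ ⋀[R]^j M) :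
    (CliffordAlgebra.equivExterior Q)
        ((CliffordAlgebra.equivExterior Q).symm α * (CliffordAlgebra.equivExterior Q).symm β)
      - α * β ∈ ⨆ k ∈ {k : ℕ | k + 2 ≤ i + j}, ⋀[R]^k M := by
  have hβ : CliffordAlgebra.equivExterior Q ((CliffordAlgebra.equivExterior Q).symm β) ∈
      ExteriorAlgebra.degreeLE R M j := by
    rw [LinearEquiv.apply_symm_apply]
    exact ExteriorAlgebra.pow_le_degreeLE le_rfl hβ
  have h := CliffordAlgebra.symbolDefect_mem_degreeLE hβ
    (ExteriorAlgebra.pow_le_degreeLE le_rfl hα)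
  rw [CliffordAlgebra.symbolDefect_apply, LinearEquiv.apply_symm_apply] at h
  convert h using 1
  exact iSup_congr fun k => iSup_congr_Prop (by simp only [Set.mem_ofPred_eq]; omega) fun _ => rfl
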